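/- arXiv:1408.0536 — 3 statements merged into one kernel-verified Lean document; each statement's English description precedes it below -/
import Mathlib

section
/- Let 𝒞 be a Hom-finite k-linear category with Serre functor F and fixed Serre duality isomorphisms α_{X,Y}. Let S₁, S₂ be commuting automorphisms of 𝒞, let ε₁, ε₂ ∈ k^×, and let η = η_{ε₁}(S₁) : F S₁ → S₁ F and θ = η_{ε₂}(S₂) : F S₂ → S₂ F be the induced commutation natural isomorphisms satisfying Tr_X(S_i^{-1}(η_X ∘ f)) = ε_i Tr_{S_i X}(f). Then the natural isomorphism ρ = η_{ε₁ε₂}(S₁ ∘ S₂) satisfies ρ_X = S₁(θ_X) ∘ η_{S₂ X} for all objects X. -/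
open CategoryTheory

/-- The defining trace characterization of the commutation isomorphism
`η_ε(S) : F S → S F` attached to an automorphism `S` of a category with Serre
functor `F` (with trace maps `Tr`): for all objects `X`, all `f : SX ⟶ F(SX)` and
all `h : X ⟶ FX`, if `S(h) = η_ε(S)_X ∘ f` then `Tr_X(h) = ε · Tr_{SX}(f)`.
(This is the inverse-free form of `Tr_X(S^{-1}(η_X ∘ f)) = ε · Tr_{SX}(f)`.) -/
def traceChar {k : Type*} [Field k] {C : Type*} [Category C]
    [Preadditive C] [CategoryTheory.Linear k C]
    (F : C ⥤ C) (Tr : ∀ X : C, (X ⟶ F.obj X) →ₗ[k] k)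
    (S : C ⥤ C) (ε : k) (η : S ⋙ F ≅ F ⋙ S) : Prop :=
  ∀ (X : C) (f : S.obj X ⟶ F.obj (S.obj X)) (h : X ⟶ F.obj X),
    S.map h = f ≫ η.hom.app X → Tr X h = ε * Tr (S.obj X) f

/-- Let `𝒞` be Hom-finite `k`-linear with Serre functor `F` and trace
maps `Tr` coming from fixed Serre duality isomorphisms.  Let `S₁, S₂` be commuting
automorphisms, `ε₁, ε₂ ∈ k^×`, and let `η = η_{ε₁}(S₁)` and `θ = η_{ε₂}(S₂)` be the
induced commutation isomorphisms (characterized by the trace identities).  Then the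
family `X ↦ S₁(θ_X) ∘ η_{S₂X}` satisfies the trace characterization of
`ρ = η_{ε₁ε₂}(S₁ ∘ S₂)`; i.e. `ρ_X = S₁(θ_X) ∘ η_{S₂X}` for all `X`. -/
theorem eta_eps_comp {k : Type*} [Field k] {C : Type*} [Category C]
    [Preadditive C] [CategoryTheory.Linear k C]
    [hfin : ∀ X Y : C, FiniteDimensional k (X ⟶ Y)]
    (F : C ⥤ C) [F.Additive] [F.Linear k] [F.IsEquivalence]
    (α : ∀ X Y : C, (X ⟶ Y) ≃ₗ[k] Module.Dual k (Y ⟶ F.obj X))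
    (hnatY : ∀ {X Y Y' : C} (f : X ⟶ Y) (h : Y ⟶ Y') (g' : Y' ⟶ F.obj X),
      α X Y' (f ≫ h) g' = α X Y f (h ≫ g'))
    (hnatX : ∀ {X X' Y : C} (u : X' ⟶ X) (f : X ⟶ Y) (g : Y ⟶ F.obj X'),
      α X' Y (u ≫ f) g = α X Y f (g ≫ F.map u))
    (Tr : ∀ X : C, (X ⟶ F.obj X) →ₗ[k] k)
    (hTr : ∀ (X : C) (f : X ⟶ F.obj X), Tr X f = α X X (𝟙 X) f)
    (S₁ S₂ : C ⥤ C) [S₁.IsEquivalence] [S₂.IsEquivalence]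
    (hcomm : S₁ ⋙ S₂ = S₂ ⋙ S₁)
    (ε₁ ε₂ : k) (hε₁ : ε₁ ≠ 0) (hε₂ : ε₂ ≠ 0)
    (η : S₁ ⋙ F ≅ F ⋙ S₁) (θ : S₂ ⋙ F ≅ F ⋙ S₂)
    (hη : traceChar F Tr S₁ ε₁ η) (hθ : traceChar F Tr S₂ ε₂ θ) :
    ∀ (X : C) (f : (S₂ ⋙ S₁).obj X ⟶ F.obj ((S₂ ⋙ S₁).obj X))
      (h : X ⟶ F.obj X),
      (S₂ ⋙ S₁).map h = f ≫ (η.hom.app (S₂.obj X) ≫ S₁.map (θ.hom.app X)) →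
      Tr X h = (ε₁ * ε₂) * Tr ((S₂ ⋙ S₁).obj X) f := by
  intro X f h hf
  set g : S₂.obj X ⟶ F.obj (S₂.obj X) := S₂.map h ≫ θ.inv.app X with hg
  have h1 : S₂.map h = g ≫ θ.hom.app X := by simp [hg]
  have h2 : S₁.map g = f ≫ η.hom.app (S₂.obj X) := by
    have hf' : S₁.map (S₂.map h) = f ≫ η.hom.app (S₂.obj X) ≫ S₁.map (θ.hom.app X) := by
      simpa using hf
    rw [hg, S₁.map_comp]
    calc S₁.map (S₂.map h) ≫ S₁.map (θ.inv.app X)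
        = (f ≫ η.hom.app (S₂.obj X) ≫ S₁.map (θ.hom.app X)) ≫ S₁.map (θ.inv.app X) := by
          rw [hf']
      _ = f ≫ η.hom.app (S₂.obj X) := by
          simp [← S₁.map_comp]
  have e1 := hη (S₂.obj X) f g h2
  have e2 := hθ X g h h1
  rw [e2, e1]
  ring_nf
  rfl
end

section
/- Let 𝒞 be a bigraded Hom-finite k-linear triangulated category satisfying the skew Calabi-Yau hypothesis with Serre functor F = Σ^d T^ℓ Φ and scalars s, t. Let X be an object with an isomorphism φ : X → Φ(X). Then the bigraded algebra E(X) = ⊕_{i,j} Hom(X, Σ^i T^j X), with multiplication given by graded composition, is a Frobenius algebra: the bilinear form (f, g) = Tr_X(φ * f * g) for |g| = (i,j), |f| = (d-i, ℓ-j) (and zero when degrees do not sum to (d,ℓ)) is associative and nondegenerate. -/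
/-!
Pairing `(a * b, c)` and `(a, b * c)` both evaluate `Tr_X` on the same triple composite,
because `Σ^{i+p} T^{j+q} = Σ^i T^j ∘ Σ^p T^q` makes graded composition associative.
For nondegeneracy, `Σ^i T^j` is a strict automorphism of `𝒞` (with inverse `Σ^{-i} T^{-j}`),
hence bijective on Hom-sets, and `φ` is invertible; so as `f` runs through
`Hom(X, Σ^p T^q X)`, the morphism `Σ^i T^j(f)` followed by `Σ^d T^ℓ(φ)` runs through all of
`Hom(Σ^i T^j X, Σ^d T^ℓ Φ X)`, and nondegeneracy of the Serre trace pairing concludes.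
-/

open CategoryTheory

/-- `sh S T i j X` denotes `Σ^i T^j X`. -/
def sh {C : Type*} [Category C] (S T : ℤ → C ⥤ C) (i j : ℤ) (X : C) : C :=
  (S i).obj ((T j).obj X)

/-- Graded (bigraded) composition `a * b = Σ^i T^j(a) ∘ b` of homogeneous elements of
the endomorphism algebra `E(X₀)`, where `a` has bidegree `(p,q)` and `b` has
bidegree `(i,j)`. -/
def gmul {C : Type*} [Category C] (S T : ℤ → C ⥤ C)
    (hcomb : ∀ (i j i' j' : ℤ) (X : C),
      sh S T i j (sh S T i' j' X) = sh S T (i + i') (j + j') X)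
    {X₀ : C} {p q i j : ℤ}
    (a : X₀ ⟶ sh S T p q X₀) (b : X₀ ⟶ sh S T i j X₀) :
    X₀ ⟶ sh S T (i + p) (j + q) X₀ :=
  b ≫ (S i).map ((T j).map a) ≫ eqToHom (hcomb i j p q X₀)

/-- The Frobenius bilinear form `(f, g) = Tr_X(φ * f * g)` on `E(X₀)`, for `g` of
bidegree `(i,j)` and `f` of bidegree `(p,q)` with `(p,q) + (i,j) = (d,ℓ)` (the
latter being witnessed by the object identification `e`). -/
def pairB {k : Type*} [Field k] {C : Type*} [Category C]
    [Preadditive C] [CategoryTheory.Linear k C]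
    (S T : ℤ → C ⥤ C) (Φ : C ⥤ C) (d ℓ : ℤ)
    (Tr : ∀ X : C, (X ⟶ sh S T d ℓ (Φ.obj X)) →ₗ[k] k)
    {X₀ : C} (φ : X₀ ⟶ Φ.obj X₀) {p q i j : ℤ}
    (f : X₀ ⟶ sh S T p q X₀) (g : X₀ ⟶ sh S T i j X₀)
    (e : sh S T i j (sh S T p q X₀) = sh S T d ℓ X₀) : k :=
  Tr X₀ (g ≫ (S i).map ((T j).map f) ≫ eqToHom e ≫ (S d).map ((T ℓ).map φ))


def CategoryTheory.Functor.FullyFaithful.ofCompEqId {C D : Type*} [Category C] [Category D]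
    {F : C ⥤ D} {G : D ⥤ C} (h₁ : F ⋙ G = 𝟭 C) (h₂ : G ⋙ F = 𝟭 D) : F.FullyFaithful :=
  (Equivalence.mk F G (eqToIso h₁.symm) (eqToIso h₂)).fullyFaithfulFunctor

section BigradedShift

variable {C : Type*} [Category C]

def fullyFaithfulOfZeroAdd (S : ℤ → C ⥤ C) (h0 : S 0 = 𝟭 C)
    (hadd : ∀ i j : ℤ, S (i + j) = S j ⋙ S i) (i : ℤ) : (S i).FullyFaithful :=
  .ofCompEqId (by rw [← hadd, neg_add_cancel, h0]) (by rw [← hadd, add_neg_cancel, h0])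

variable (S T : ℤ → C ⥤ C)

lemma shift_comp_add (hSadd : ∀ i j : ℤ, S (i + j) = S j ⋙ S i)
    (hTadd : ∀ i j : ℤ, T (i + j) = T j ⋙ T i) (hST : ∀ i j : ℤ, S i ⋙ T j = T j ⋙ S i)
    (i j p q : ℤ) : T (j + q) ⋙ S (i + p) = (T q ⋙ S p) ⋙ (T j ⋙ S i) := by
  rw [hSadd, hTadd]
  calc (T q ⋙ T j) ⋙ S p ⋙ S i = T q ⋙ (T j ⋙ S p) ⋙ S i := rfl
    _ = T q ⋙ (S p ⋙ T j) ⋙ S i := by rw [hST]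
    _ = (T q ⋙ S p) ⋙ (T j ⋙ S i) := rfl

variable {S T} (hcomb : ∀ (i j i' j' : ℤ) (X : C),
  sh S T i j (sh S T i' j' X) = sh S T (i + i') (j + j') X)

lemma gmul_assoc (hSadd : ∀ i j : ℤ, S (i + j) = S j ⋙ S i)
    (hTadd : ∀ i j : ℤ, T (i + j) = T j ⋙ T i) (hST : ∀ i j : ℤ, S i ⋙ T j = T j ⋙ S i)
    {X₀ : C} {i₁ j₁ i₂ j₂ i₃ j₃ : ℤ} (a : X₀ ⟶ sh S T i₁ j₁ X₀) (b : X₀ ⟶ sh S T i₂ j₂ X₀)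
    (c : X₀ ⟶ sh S T i₃ j₃ X₀) :
    gmul S T hcomb (gmul S T hcomb a b) c =
      gmul S T hcomb a (gmul S T hcomb b c) ≫ eqToHom (by rw [add_assoc, add_assoc]) := by
  have h := Functor.congr_hom (shift_comp_add S T hSadd hTadd hST i₃ j₃ i₂ j₂) a
  simp only [Functor.comp_map] at h
  unfold gmul
  -- `sh` is a plain `def`: unfold it so that `simp` can match the objects in `eqToHom` lemmas.
  delta sh at *
  simp only [Functor.map_comp, eqToHom_map, Category.assoc, h, eqToHom_trans, eqToHom_refl,
    Category.id_comp, eqToHom_trans_assoc]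

lemma pairB_eq_trace_gmul {k : Type*} [Field k] [Preadditive C] [Linear k C] (Φ : C ⥤ C)
    (d ℓ : ℤ) (Tr : ∀ X : C, (X ⟶ sh S T d ℓ (Φ.obj X)) →ₗ[k] k) {X₀ : C}
    (φ : X₀ ⟶ Φ.obj X₀) {p q i j : ℤ} (f : X₀ ⟶ sh S T p q X₀) (g : X₀ ⟶ sh S T i j X₀)
    (e : sh S T i j (sh S T p q X₀) = sh S T d ℓ X₀) :
    pairB S T Φ d ℓ Tr φ f g e = Tr X₀ (gmul S T hcomb f g ≫
      eqToHom ((hcomb i j p q X₀).symm.trans e) ≫ (S d).map ((T ℓ).map φ)) := by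
  unfold pairB gmul
  delta sh at *
  simp only [Category.assoc, eqToHom_trans_assoc]

lemma pairB_gmul_assoc {k : Type*} [Field k] [Preadditive C] [Linear k C]
    (hSadd : ∀ i j : ℤ, S (i + j) = S j ⋙ S i)
    (hTadd : ∀ i j : ℤ, T (i + j) = T j ⋙ T i) (hST : ∀ i j : ℤ, S i ⋙ T j = T j ⋙ S i)
    (Φ : C ⥤ C) (d ℓ : ℤ) (Tr : ∀ X : C, (X ⟶ sh S T d ℓ (Φ.obj X)) →ₗ[k] k) {X₀ : C}
    (φ : X₀ ⟶ Φ.obj X₀) {i₁ j₁ i₂ j₂ i₃ j₃ : ℤ} (a : X₀ ⟶ sh S T i₁ j₁ X₀)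
    (b : X₀ ⟶ sh S T i₂ j₂ X₀) (c : X₀ ⟶ sh S T i₃ j₃ X₀)
    (e₁ : sh S T i₃ j₃ (sh S T (i₂ + i₁) (j₂ + j₁) X₀) = sh S T d ℓ X₀)
    (e₂ : sh S T (i₃ + i₂) (j₃ + j₂) (sh S T i₁ j₁ X₀) = sh S T d ℓ X₀) :
    pairB S T Φ d ℓ Tr φ (gmul S T hcomb a b) c e₁ =
      pairB S T Φ d ℓ Tr φ a (gmul S T hcomb b c) e₂ := by
  rw [pairB_eq_trace_gmul hcomb, pairB_eq_trace_gmul hcomb, gmul_assoc hcomb hSadd hTadd hST]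
  unfold gmul
  delta sh at *
  simp only [Category.assoc, eqToHom_trans_assoc]

end BigradedShift

section Nondegenerate

variable {k : Type*} [Field k] {C : Type*} [Category C] [Preadditive C] [Linear k C]
  {S T : ℤ → C ⥤ C} {Φ : C ⥤ C} {d ℓ : ℤ} {Tr : ∀ X : C, (X ⟶ sh S T d ℓ (Φ.obj X)) →ₗ[k] k}
  {X₀ : C} (φ : X₀ ⟶ Φ.obj X₀) [IsIso φ] {p q i j : ℤ}

lemma right_eq_zero_of_forall_pairB_eq_zero [(T j ⋙ S i).Full]
    (hnd : ∀ (W : C) (f : X₀ ⟶ W),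
      (∀ g : W ⟶ sh S T d ℓ (Φ.obj X₀), Tr X₀ (f ≫ g) = 0) → f = 0)
    (g : X₀ ⟶ sh S T i j X₀) (e : sh S T i j (sh S T p q X₀) = sh S T d ℓ X₀)
    (h : ∀ f : X₀ ⟶ sh S T p q X₀, pairB S T Φ d ℓ Tr φ f g e = 0) : g = 0 := by
  unfold pairB at h
  delta sh at *
  refine hnd _ g fun v => ?_
  obtain ⟨f, hf⟩ := (T j ⋙ S i).map_surjective
    (v ≫ inv ((S d).map ((T ℓ).map φ)) ≫ eqToHom e.symm)
  have hv := h f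
  rw [show (S i).map ((T j).map f) = _ from hf] at hv
  simpa using hv

lemma left_eq_zero_of_forall_pairB_eq_zero [(T j ⋙ S i).Full] [(T j ⋙ S i).Faithful]
    (hnd : ∀ (W : C) (g : W ⟶ sh S T d ℓ (Φ.obj X₀)),
      (∀ f : X₀ ⟶ W, Tr X₀ (f ≫ g) = 0) → g = 0)
    (f : X₀ ⟶ sh S T p q X₀) (e : sh S T i j (sh S T p q X₀) = sh S T d ℓ X₀)
    (h : ∀ g : X₀ ⟶ sh S T i j X₀, pairB S T Φ d ℓ Tr φ f g e = 0) : f = 0 := by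
  unfold pairB at h
  delta sh at *
  have hshift : (S i).map ((T j).map f) ≫ eqToHom e ≫ (S d).map ((T ℓ).map φ) = 0 :=
    hnd _ _ fun g => by simpa only [Category.assoc] using h g
  have hshift' : (T j ⋙ S i).map f = 0 := by simpa using hshift
  exact (T j ⋙ S i).map_eq_zero_iff.1 hshift'

end Nondegenerate

theorem ext_algebra_frobenius {k : Type*} [Field k] {C : Type*} [Category C]
    [Preadditive C] [CategoryTheory.Linear k C]
    (S T : ℤ → C ⥤ C) (Φ : C ⥤ C)
    (hS0 : S 0 = 𝟭 C) (hSadd : ∀ i j : ℤ, S (i + j) = S j ⋙ S i)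
    (hT0 : T 0 = 𝟭 C) (hTadd : ∀ i j : ℤ, T (i + j) = T j ⋙ T i)
    (hST : ∀ i j : ℤ, S i ⋙ T j = T j ⋙ S i)
    (hcomb : ∀ (i j i' j' : ℤ) (X : C),
      sh S T i j (sh S T i' j' X) = sh S T (i + i') (j + j') X)
    (d ℓ : ℤ)
    (Tr : ∀ X : C, (X ⟶ sh S T d ℓ (Φ.obj X)) →ₗ[k] k)
    (X₀ : C) (φ : X₀ ⟶ Φ.obj X₀) [IsIso φ]
    -- nondegeneracy of the Serre duality trace pairing
    (hnd₁ : ∀ (W : C) (g : W ⟶ sh S T d ℓ (Φ.obj X₀)),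
      (∀ f : X₀ ⟶ W, Tr X₀ (f ≫ g) = 0) → g = 0)
    (hnd₂ : ∀ (W : C) (f : X₀ ⟶ W),
      (∀ g : W ⟶ sh S T d ℓ (Φ.obj X₀), Tr X₀ (f ≫ g) = 0) → f = 0) :
    -- associativity of the pairing: `(a * b, c) = (a, b * c)`
    (∀ (i₁ j₁ i₂ j₂ i₃ j₃ : ℤ) (hsum : i₁ + i₂ + i₃ = d) (jsum : j₁ + j₂ + j₃ = ℓ)
      (a : X₀ ⟶ sh S T i₁ j₁ X₀) (b : X₀ ⟶ sh S T i₂ j₂ X₀)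
      (c : X₀ ⟶ sh S T i₃ j₃ X₀),
      pairB S T Φ d ℓ Tr φ (gmul S T hcomb a b) c
          (by rw [hcomb, show i₃ + (i₂ + i₁) = d from by omega,
              show j₃ + (j₂ + j₁) = ℓ from by omega]) =
        pairB S T Φ d ℓ Tr φ a (gmul S T hcomb b c)
          (by rw [hcomb, show i₃ + i₂ + i₁ = d from by omega,
              show j₃ + j₂ + j₁ = ℓ from by omega])) ∧
    -- nondegeneracy of the pairing, on both sides
    (∀ (i j : ℤ) (g : X₀ ⟶ sh S T i j X₀),
      (∀ f : X₀ ⟶ sh S T (d - i) (ℓ - j) X₀,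
        pairB S T Φ d ℓ Tr φ f g
          (by rw [hcomb, show i + (d - i) = d from by ring,
              show j + (ℓ - j) = ℓ from by ring]) = 0) → g = 0) ∧
    (∀ (p q : ℤ) (f : X₀ ⟶ sh S T p q X₀),
      (∀ g : X₀ ⟶ sh S T (d - p) (ℓ - q) X₀,
        pairB S T Φ d ℓ Tr φ f g
          (by rw [hcomb, show d - p + p = d from by ring,
              show ℓ - q + q = ℓ from by ring]) = 0) → f = 0) := by
  have hF : ∀ i j, (T j ⋙ S i).FullyFaithful := fun i j =>
    (fullyFaithfulOfZeroAdd T hT0 hTadd j).comp (fullyFaithfulOfZeroAdd S hS0 hSadd i)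
  refine ⟨fun i₁ j₁ i₂ j₂ i₃ j₃ _ _ a b c => ?_, fun i j g h => ?_, fun p q f h => ?_⟩
  · exact pairB_gmul_assoc hcomb hSadd hTadd hST Φ d ℓ Tr φ a b c _ _
  · have := (hF i j).full
    exact right_eq_zero_of_forall_pairB_eq_zero φ hnd₂ g _ h
  · have := (hF (d - p) (ℓ - q)).full
    have := (hF (d - p) (ℓ - q)).faithful
    exact left_eq_zero_of_forall_pairB_eq_zero φ hnd₁ f _ h
end

section
/- In the setting of the previous theorem (skew CY category with F = Σ^d T^ℓ Φ, scalars s, t, object X with isomorphism φ : X → Φ(X), and E(X) the bigraded endomorphism algebra), the map μ sending a homogeneous element g ∈ Hom(X, Σ^i T^j X) to (-s)^i t^j · Σ^i T^j(φ)^{-1} ∘ Φ(g) ∘ φ is a Nakayama automorphism of the Frobenius algebra E(X), i.e. (f, g) = (μ(g), f) for all homogeneous f, g. -/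
/-!
The identity comes from rotating pairings through the trace. The trace axiom gives
`Tr(u ≫ w) = Tr(w ≫ Σ^d T^ℓ Φ(u))`, and the skew Calabi-Yau axiom says that the trace of a
shifted morphism `Σ^a T^b(w)` is `(-1)^a s^a t^b` times the trace of `w`. Together they move the
left factor of a pairing to the right at the cost of the scalar `(-1)^a s^a t^b`; applied to
`(f, g)` this yields `(-1)^i s^i t^j (φ⁻¹ Φ(g) φ, f)`, and `(-1)^i s^i t^j = (-s)^i t^j`.
-/

open CategoryTheory

section ShiftFunctors

variable {C : Type*} [Category C] (S T : ℤ → C ⥤ C)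

-- `Σ^a T^b` on morphisms, typed through `sh` so that composites with `eqToHom` between
-- `sh`-objects can be rewritten.
def shMap (a b : ℤ) {X Y : C} (f : X ⟶ Y) : sh S T a b X ⟶ sh S T a b Y :=
  (S a).map ((T b).map f)

variable {S T}

@[simp]
theorem shMap_id (a b : ℤ) (X : C) : shMap S T a b (𝟙 X) = 𝟙 (sh S T a b X) :=
  (T b ⋙ S a).map_id X

@[simp]
theorem shMap_comp (a b : ℤ) {X Y Z : C} (f : X ⟶ Y) (g : Y ⟶ Z) :
    shMap S T a b (f ≫ g) = shMap S T a b f ≫ shMap S T a b g :=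
  (T b ⋙ S a).map_comp f g

@[simp]
theorem shMap_eqToHom (a b : ℤ) {X Y : C} (p : X = Y) :
    shMap S T a b (eqToHom p) = eqToHom (congrArg (sh S T a b) p) :=
  eqToHom_map (T b ⋙ S a) p

theorem shift_comp_shift (hSadd : ∀ i j : ℤ, S (i + j) = S j ⋙ S i)
    (hTadd : ∀ i j : ℤ, T (i + j) = T j ⋙ T i) (hST : ∀ i j : ℤ, S i ⋙ T j = T j ⋙ S i)
    {a b a' b' a'' b'' : ℤ} (ha : a + a' = a'') (hb : b + b' = b'') :
    (T b' ⋙ S a') ⋙ T b ⋙ S a = T b'' ⋙ S a'' := by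
  subst ha hb
  rw [hSadd, hTadd]
  show T b' ⋙ (S a' ⋙ T b) ⋙ S a = T b' ⋙ (T b ⋙ S a') ⋙ S a
  rw [hST]

theorem sh_sh (hSadd : ∀ i j : ℤ, S (i + j) = S j ⋙ S i)
    (hTadd : ∀ i j : ℤ, T (i + j) = T j ⋙ T i) (hST : ∀ i j : ℤ, S i ⋙ T j = T j ⋙ S i)
    {a b a' b' a'' b'' : ℤ} (ha : a + a' = a'') (hb : b + b' = b'') (X : C) :
    sh S T a b (sh S T a' b' X) = sh S T a'' b'' X :=
  Functor.congr_obj (shift_comp_shift hSadd hTadd hST ha hb) X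

theorem eqToHom_comp_shMap (hSadd : ∀ i j : ℤ, S (i + j) = S j ⋙ S i)
    (hTadd : ∀ i j : ℤ, T (i + j) = T j ⋙ T i) (hST : ∀ i j : ℤ, S i ⋙ T j = T j ⋙ S i)
    {a b a' b' a'' b'' : ℤ} (ha : a + a' = a'') (hb : b + b' = b'') {X Y : C} (x : X ⟶ Y)
    (e : sh S T a b (sh S T a' b' X) = sh S T a'' b'' X) :
    eqToHom e ≫ shMap S T a'' b'' x =
      shMap S T a b (shMap S T a' b' x) ≫
        eqToHom (sh_sh hSadd hTadd hST ha hb Y) := by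
  have h : shMap S T a b (shMap S T a' b' x) = eqToHom e ≫ shMap S T a'' b'' x ≫
      eqToHom (sh_sh hSadd hTadd hST ha hb Y).symm :=
    Functor.congr_hom (shift_comp_shift hSadd hTadd hST ha hb) x
  simp [h]

end ShiftFunctors

section SkewCalabiYau

variable {k : Type*} [Field k] {C : Type*} [Category C] [Preadditive C] [Linear k C]

structure IsSkewCalabiYauTrace (S T : ℤ → C ⥤ C) (Φ : C ⥤ C) (d ℓ : ℤ) (s t : k)
    (Tr : ∀ X : C, (X ⟶ sh S T d ℓ (Φ.obj X)) →ₗ[k] k) : Prop where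
  S_add : ∀ i j : ℤ, S (i + j) = S j ⋙ S i
  T_add : ∀ i j : ℤ, T (i + j) = T j ⋙ T i
  S_comp_T : ∀ i j : ℤ, S i ⋙ T j = T j ⋙ S i
  Φ_obj_sh : ∀ (i j : ℤ) (X : C), Φ.obj (sh S T i j X) = sh S T i j (Φ.obj X)
  s_ne_zero : s ≠ 0
  t_ne_zero : t ≠ 0
  trace_comp : ∀ (X Y : C) (f : X ⟶ Y) (g : Y ⟶ sh S T d ℓ (Φ.obj X)),
    Tr X (f ≫ g) = Tr Y (g ≫ shMap S T d ℓ (Φ.map f))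
  trace_shift : ∀ (a b : ℤ) (X : C) (f : sh S T a b X ⟶ sh S T d ℓ (Φ.obj (sh S T a b X)))
    (h : X ⟶ sh S T d ℓ (Φ.obj X))
    (e : sh S T d ℓ (Φ.obj (sh S T a b X)) = sh S T a b (sh S T d ℓ (Φ.obj X))),
    shMap S T a b h = (s ^ a * t ^ b) • (f ≫ eqToHom e) →
      Tr X h = (-1 : k) ^ a * Tr (sh S T a b X) f

namespace IsSkewCalabiYauTrace

variable {S T : ℤ → C ⥤ C} {Φ : C ⥤ C} {d ℓ : ℤ} {s t : k}
  {Tr : ∀ X : C, (X ⟶ sh S T d ℓ (Φ.obj X)) →ₗ[k] k}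

theorem trace_shMap_comp_eqToHom (H : IsSkewCalabiYauTrace S T Φ d ℓ s t Tr)
    (a b : ℤ) {X Z : C} (w : X ⟶ Z) (e : Z = sh S T d ℓ (Φ.obj X))
    (e' : sh S T a b Z = sh S T d ℓ (Φ.obj (sh S T a b X))) :
    Tr (sh S T a b X) (shMap S T a b w ≫ eqToHom e') =
      (-1 : k) ^ a * (s ^ a * t ^ b) * Tr X (w ≫ eqToHom e) := by
  subst e
  have hc : s ^ a * t ^ b ≠ 0 :=
    mul_ne_zero (zpow_ne_zero _ H.s_ne_zero) (zpow_ne_zero _ H.t_ne_zero)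
  have hsign : (-1 : k) ^ a * (-1 : k) ^ a = 1 := by
    rw [← zpow_add₀ (neg_ne_zero.2 one_ne_zero), Even.neg_one_zpow ⟨a, rfl⟩]
  have key := H.trace_shift a b X ((s ^ a * t ^ b)⁻¹ • (shMap S T a b w ≫ eqToHom e')) w e'.symm
    (by rw [Linear.smul_comp, smul_smul, mul_inv_cancel₀ hc, one_smul, Category.assoc,
      eqToHom_trans, eqToHom_refl, Category.comp_id])
  rw [map_smul, smul_eq_mul] at key
  rw [eqToHom_refl, Category.comp_id, key, mul_mul_mul_comm, hsign, one_mul,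
    mul_inv_cancel_left₀ hc]

theorem trace_comp_shMap_comp_eqToHom (H : IsSkewCalabiYauTrace S T Φ d ℓ s t Tr)
    {a b a' b' : ℤ} (ha : a + a' = d) (hb : b + b' = ℓ) {X : C}
    (u : X ⟶ sh S T a b X) (v : X ⟶ sh S T a' b' (Φ.obj X))
    (e : sh S T a b (sh S T a' b' (Φ.obj X)) = sh S T d ℓ (Φ.obj X)) :
    Tr X (u ≫ shMap S T a b v ≫ eqToHom e) =
      (-1 : k) ^ a * (s ^ a * t ^ b) * Tr X (v ≫ shMap S T a' b' (Φ.map u) ≫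
        eqToHom ((congrArg (sh S T a' b') (H.Φ_obj_sh a b X)).trans
          (sh_sh H.S_add H.T_add H.S_comp_T ((add_comm a' a).trans ha)
            ((add_comm b' b).trans hb) _))) := by
  rw [H.trace_comp, Category.assoc, eqToHom_comp_shMap H.S_add H.T_add H.S_comp_T ha hb,
    ← Category.assoc, ← shMap_comp, H.trace_shMap_comp_eqToHom, Category.assoc]

theorem pairB_eq_trace_shMap {X : C} (φ : X ⟶ Φ.obj X) {a b a' b' : ℤ}
    (v : X ⟶ sh S T a' b' X) (u : X ⟶ sh S T a b X)
    (e : sh S T a b (sh S T a' b' X) = sh S T d ℓ X) :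
    pairB S T Φ d ℓ Tr φ v u e = Tr X (u ≫ shMap S T a b v ≫ eqToHom e ≫ shMap S T d ℓ φ) :=
  rfl

theorem pairB_eq_trace (H : IsSkewCalabiYauTrace S T Φ d ℓ s t Tr)
    {a b a' b' : ℤ} (ha : a + a' = d) (hb : b + b' = ℓ) {X : C} (φ : X ⟶ Φ.obj X)
    (v : X ⟶ sh S T a' b' X) (u : X ⟶ sh S T a b X)
    (e : sh S T a b (sh S T a' b' X) = sh S T d ℓ X) :
    pairB S T Φ d ℓ Tr φ v u e =
      (-1 : k) ^ a * (s ^ a * t ^ b) * Tr X (v ≫ shMap S T a' b' (φ ≫ Φ.map u) ≫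
        eqToHom ((congrArg (sh S T a' b') (H.Φ_obj_sh a b X)).trans
          (sh_sh H.S_add H.T_add H.S_comp_T ((add_comm a' a).trans ha)
            ((add_comm b' b).trans hb) _))) := by
  rw [pairB_eq_trace_shMap, eqToHom_comp_shMap H.S_add H.T_add H.S_comp_T ha hb,
    ← Category.assoc (shMap S T a b v), ← shMap_comp, H.trace_comp_shMap_comp_eqToHom ha hb,
    shMap_comp, Category.assoc, Category.assoc]

-- The shift functors are not assumed linear, so the scalar is moved out by rotating it to an
-- unshifted position.
theorem pairB_smul_left (H : IsSkewCalabiYauTrace S T Φ d ℓ s t Tr)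
    {a b a' b' : ℤ} (ha : a' + a = d) (hb : b' + b = ℓ) {X : C} (φ : X ⟶ Φ.obj X) (c : k)
    (x : X ⟶ sh S T a b X) (y : X ⟶ sh S T a' b' X)
    (e : sh S T a' b' (sh S T a b X) = sh S T d ℓ X) :
    pairB S T Φ d ℓ Tr φ (c • x) y e = c * pairB S T Φ d ℓ Tr φ x y e := by
  rw [H.pairB_eq_trace ha hb, H.pairB_eq_trace ha hb, Linear.smul_comp, map_smul, smul_eq_mul,
    mul_left_comm]

theorem pairB_eq_mul_pairB_nakayama (H : IsSkewCalabiYauTrace S T Φ d ℓ s t Tr)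
    {a b a' b' : ℤ} (ha : a + a' = d) (hb : b + b' = ℓ) {X : C} (φ : X ⟶ Φ.obj X) [IsIso φ]
    (v : X ⟶ sh S T a' b' X) (u : X ⟶ sh S T a b X)
    (e : sh S T a b (sh S T a' b' X) = sh S T d ℓ X) :
    pairB S T Φ d ℓ Tr φ v u e =
      (-1 : k) ^ a * (s ^ a * t ^ b) *
        pairB S T Φ d ℓ Tr φ (φ ≫ Φ.map u ≫ eqToHom (H.Φ_obj_sh a b X) ≫ shMap S T a b (inv φ)) v
          (sh_sh H.S_add H.T_add H.S_comp_T ((add_comm a' a).trans ha)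
            ((add_comm b' b).trans hb) X) := by
  rw [H.pairB_eq_trace ha hb, pairB_eq_trace_shMap,
    eqToHom_comp_shMap H.S_add H.T_add H.S_comp_T ((add_comm a' a).trans ha)
      ((add_comm b' b).trans hb),
    ← Category.assoc (shMap S T a' b' _), ← shMap_comp]
  have hμ : (φ ≫ Φ.map u ≫ eqToHom (H.Φ_obj_sh a b X) ≫ shMap S T a b (inv φ)) ≫
      shMap S T a b φ = φ ≫ Φ.map u ≫ eqToHom (H.Φ_obj_sh a b X) := by
    rw [Category.assoc, Category.assoc, Category.assoc, ← shMap_comp, IsIso.inv_hom_id, shMap_id,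
      Category.comp_id]
  rw [hμ]
  simp

end IsSkewCalabiYauTrace

end SkewCalabiYau

/-- Theorem 2.7, Nakayama automorphism: in a bigraded Hom-finite
`k`-linear triangulated category satisfying the skew Calabi-Yau hypothesis with
Serre functor `F = Σ^d T^ℓ Φ` and scalars `s, t`, if `X₀` is an object with an
isomorphism `φ : X₀ → Φ(X₀)`, then the bilinear form
`(f,g) = Tr_{X₀}(φ * f * g)` on `E(X₀) = ⊕ Hom(X₀, Σ^i T^j X₀)` is associative
and nondegenerate; hence `E(X₀)` is a bigraded Frobenius algebra. -/
theorem ext_algebra_nakayama {k : Type*} [Field k] {C : Type*} [Category C]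
    [Preadditive C] [CategoryTheory.Linear k C]
    (S T : ℤ → C ⥤ C) (Φ : C ⥤ C)
    (hSadd : ∀ i j : ℤ, S (i + j) = S j ⋙ S i)
    (hTadd : ∀ i j : ℤ, T (i + j) = T j ⋙ T i)
    (hST : ∀ i j : ℤ, S i ⋙ T j = T j ⋙ S i)
    (hcomb : ∀ (i j i' j' : ℤ) (X : C),
      sh S T i j (sh S T i' j' X) = sh S T (i + i') (j + j') X)
    (hΦsh : ∀ (i j : ℤ) (X : C), Φ.obj (sh S T i j X) = sh S T i j (Φ.obj X))
    (d ℓ : ℤ) (s t : k) (hs : s ≠ 0) (ht : t ≠ 0)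
    (Tr : ∀ X : C, (X ⟶ sh S T d ℓ (Φ.obj X)) →ₗ[k] k)
    (htrace0 : ∀ (X Y : C) (f : X ⟶ Y) (g : Y ⟶ sh S T d ℓ (Φ.obj X)),
      Tr X (f ≫ g) = Tr Y (g ≫ (S d).map ((T ℓ).map (Φ.map f))))
    (htr : ∀ (i j : ℤ) (X : C)
      (f : sh S T i j X ⟶ sh S T d ℓ (Φ.obj (sh S T i j X)))
      (h : X ⟶ sh S T d ℓ (Φ.obj X)),
      (S i).map ((T j).map h) = (s ^ i * t ^ j) • (f ≫ eqToHom
        (by rw [hΦsh, hcomb, hcomb, add_comm d i, add_comm ℓ j] :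
          sh S T d ℓ (Φ.obj (sh S T i j X)) = sh S T i j (sh S T d ℓ (Φ.obj X)))) →
      Tr X h = (-1 : k) ^ i * Tr (sh S T i j X) f)
    (X₀ : C) (φ : X₀ ⟶ Φ.obj X₀) [IsIso φ]
    -- the map `g ↦ (-s)^i t^j · φ^{-1} ∘ Φ(g) ∘ φ` satisfies the defining
    -- property `(f, g) = (μ(g), f)` of a Nakayama automorphism of `E(X₀)`:
    (i j : ℤ) (g : X₀ ⟶ sh S T i j X₀) (f : X₀ ⟶ sh S T (d - i) (ℓ - j) X₀) :
    pairB S T Φ d ℓ Tr φ f g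
        (by rw [hcomb, show i + (d - i) = d from by ring,
            show j + (ℓ - j) = ℓ from by ring]) =
      pairB S T Φ d ℓ Tr φ
        (((-s) ^ i * t ^ j) •
          (φ ≫ Φ.map g ≫ eqToHom (hΦsh i j X₀) ≫ (S i).map ((T j).map (inv φ))))
        f
        (by rw [hcomb, show d - i + i = d from by ring,
            show ℓ - j + j = ℓ from by ring]) := by
  have H : IsSkewCalabiYauTrace S T Φ d ℓ s t Tr :=
    ⟨hSadd, hTadd, hST, hΦsh, hs, ht, htrace0, fun a b X f h _ => htr a b X f h⟩
  have hsign : (-1) ^ i * (s ^ i * t ^ j) = (-s) ^ i * t ^ j := by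
    rw [show -s = -1 * s from (neg_one_mul s).symm, mul_zpow, mul_assoc]
  rw [H.pairB_eq_mul_pairB_nakayama (add_sub_cancel i d) (add_sub_cancel j ℓ), hsign]
  exact (H.pairB_smul_left (sub_add_cancel d i) (sub_add_cancel ℓ j) φ _ _ f _).symm
end
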